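/- Let x and t be nonempty words such that x^i is a prefix of t^ω for all i ≥ 0. Then the primitive root of t equals the primitive root of x. -/
import Mathlib


def wpow {α : Type*} (u : List α) : ℕ → List α
  | 0 => []
  | k + 1 => u ++ wpow u k

def IsPrimRoot {α : Type*} (r u : List α) : Prop :=
  (∃ k, 1 ≤ k ∧ u = wpow r k) ∧ ∀ w k, 1 ≤ k → u = wpow w k → r.length ≤ w.length

lemma wpow_nil {α : Type*} (k : ℕ) : wpow ([] : List α) k = [] := by
  induction k with
  | zero => rfl
  | succ k ih => simp [wpow, ih]

lemma wpow_one {α : Type*} (u : List α) : wpow u 1 = u := by simp [wpow]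

lemma wpow_add {α : Type*} (u : List α) (a b : ℕ) :
    wpow u (a + b) = wpow u a ++ wpow u b := by
  induction a with
  | zero => simp [wpow]
  | succ a ih => simp [Nat.succ_add, wpow, ih]

lemma wpow_wpow {α : Type*} (u : List α) (a k : ℕ) :
    wpow (wpow u a) k = wpow u (a * k) := by
  induction k with
  | zero => simp [wpow]
  | succ k ih => rw [wpow, ih, Nat.mul_succ, Nat.add_comm, wpow_add]

lemma length_wpow {α : Type*} (u : List α) (k : ℕ) :
    (wpow u k).length = k * u.length := by
  induction k with
  | zero => simp [wpow]
  | succ k ih => simp [wpow, ih, Nat.succ_mul]; ring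

lemma wpow_prefix {α : Type*} (u : List α) {a b : ℕ} (h : a ≤ b) :
    wpow u a <+: wpow u b := by
  obtain ⟨c, rfl⟩ := Nat.exists_eq_add_of_le h
  rw [wpow_add]
  exact List.prefix_append _ _

lemma prefix_append_left {α : Type*} (w : List α) {u v : List α} (h : u <+: v) :
    w ++ u <+: w ++ v := by
  obtain ⟨s, rfl⟩ := h
  exact ⟨s, by simp⟩

lemma comm_aux {α : Type*} : ∀ n (x t : List α), x ≠ [] → t ≠ [] →
    x.length ≤ t.length → t.length ≤ n → x ++ t = t ++ x →
    ∃ w a b, 1 ≤ a ∧ 1 ≤ b ∧ x = wpow w a ∧ t = wpow w b := by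
  intro n
  induction n with
  | zero =>
    intro x t hx ht hle hn _
    exact absurd (List.length_eq_zero_iff.mp (Nat.le_zero.mp hn)) ht
  | succ n ih =>
    intro x t hx ht hle hn hc
    have hxt : x <+: t := by
      refine List.prefix_of_prefix_length_le ?_ (List.prefix_append t x) hle
      rw [← hc]; exact List.prefix_append x t
    obtain ⟨s, rfl⟩ := hxt
    have hxlen : 1 ≤ x.length := List.length_pos_iff.mpr hx
    by_cases hs : s = []
    · subst hs
      exact ⟨x, 1, 1, le_rfl, le_rfl, by rw [wpow_one], by rw [wpow_one, List.append_nil]⟩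
    · have hslen : 1 ≤ s.length := List.length_pos_iff.mpr hs
      have hn' : x.length + s.length ≤ n + 1 := by simpa using hn
      have hc' : x ++ s = s ++ x := by
        have : x ++ (x ++ s) = x ++ (s ++ x) := by
          rw [hc]; simp [List.append_assoc]
        exact List.append_cancel_left this
      rcases le_total x.length s.length with h1 | h1
      · obtain ⟨w, a, b, ha, hb, hxw, hsw⟩ := ih x s hx hs h1 (by omega) hc'
        exact ⟨w, a, a + b, ha, by omega, hxw, by rw [wpow_add, hxw, hsw]⟩
      · obtain ⟨w, a, b, ha, hb, hsw, hxw⟩ := ih s x hs hx h1 (by omega) hc'.symm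
        exact ⟨w, b, b + a, hb, by omega, hxw, by rw [wpow_add, hxw, hsw]⟩

lemma comm_lemma {α : Type*} (x t : List α) (hx : x ≠ []) (ht : t ≠ [])
    (hc : x ++ t = t ++ x) :
    ∃ w a b, 1 ≤ a ∧ 1 ≤ b ∧ x = wpow w a ∧ t = wpow w b := by
  rcases le_total x.length t.length with h1 | h1
  · exact comm_aux t.length x t hx ht h1 le_rfl hc
  · obtain ⟨w, a, b, ha, hb, h2, h3⟩ := comm_aux x.length t x ht hx h1 le_rfl hc.symm
    exact ⟨w, b, a, hb, ha, h3, h2⟩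

/-- If `x` and `z` are nonempty and `x^i` is a prefix of `t^ω` for all `i ≥ 0`
(`t` nonempty), then the primitive root of `t` equals the primitive root of `x`. -/
theorem stmt4 {α : Type*} (x z t : List α) (hx : x ≠ []) (hz : z ≠ []) (ht : t ≠ [])
    (h : ∀ i : ℕ, ∃ k, wpow x i <+: wpow t k)
    (rt rx : List α) (hrt : IsPrimRoot rt t) (hrx : IsPrimRoot rx x) :
    rt = rx := by
  obtain ⟨⟨kt, hkt1, hkt⟩, hmint⟩ := hrt
  obtain ⟨⟨kx, hkx1, hkx⟩, hminx⟩ := hrx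
  have hrtne : rt ≠ [] := by rintro rfl; exact ht (by rw [hkt, wpow_nil])
  have hrxne : rx ≠ [] := by rintro rfl; exact hx (by rw [hkx, wpow_nil])
  have htpow : ∀ K, wpow t K = wpow rt (kt * K) := fun K => by rw [hkt, wpow_wpow]
  have hxpow : ∀ K, wpow x K = wpow rx (kx * K) := fun K => by rw [hkx, wpow_wpow]
  have A : ∀ i, ∃ K, wpow rt i <+: wpow t K := fun i =>
    ⟨i, by rw [htpow]; exact wpow_prefix rt (Nat.le_mul_of_pos_left i hkt1)⟩
  have B : ∀ i, ∃ K, wpow rx i <+: wpow t K := by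
    intro i
    obtain ⟨K, hK⟩ := h i
    refine ⟨K, .trans ?_ hK⟩
    rw [hxpow]
    exact wpow_prefix rx (Nat.le_mul_of_pos_left i hkx1)
  -- rt ++ rx is a prefix of some power of t
  have C : ∃ K, rt ++ rx <+: wpow t K := by
    obtain ⟨K, hK⟩ := B 1
    rw [wpow_one] at hK
    obtain ⟨K2, hK2⟩ := A (1 + kt * K)
    refine ⟨K2, .trans ?_ hK2⟩
    rw [wpow_add, wpow_one]
    exact prefix_append_left rt (htpow K ▸ hK)
  -- rx ++ rt is a prefix of some power of t
  have D : ∃ K, rx ++ rt <+: wpow t K := by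
    obtain ⟨K1, hK1⟩ := A 1
    rw [wpow_one] at hK1
    obtain ⟨K2, hK2⟩ := B rt.length
    have hb1 : rt <+: wpow t (max K1 K2) := hK1.trans (wpow_prefix t (le_max_left _ _))
    have hb2 : wpow rx rt.length <+: wpow t (max K1 K2) :=
      hK2.trans (wpow_prefix t (le_max_right _ _))
    have hpre : rt <+: wpow rx rt.length := by
      refine List.prefix_of_prefix_length_le hb1 hb2 ?_
      rw [length_wpow]
      exact Nat.le_mul_of_pos_right rt.length (List.length_pos_iff.mpr hrxne)
    obtain ⟨K3, hK3⟩ := B (1 + rt.length)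
    refine ⟨K3, .trans ?_ hK3⟩
    rw [wpow_add, wpow_one]
    exact prefix_append_left rx hpre
  obtain ⟨Kc, hKc⟩ := C
  obtain ⟨Kd, hKd⟩ := D
  have h1 : rt ++ rx <+: wpow t (max Kc Kd) := hKc.trans (wpow_prefix t (le_max_left _ _))
  have h2 : rx ++ rt <+: wpow t (max Kc Kd) := hKd.trans (wpow_prefix t (le_max_right _ _))
  have heq : rt ++ rx = rx ++ rt :=
    (List.prefix_of_prefix_length_le h1 h2 (by simp [Nat.add_comm])).eq_of_length
      (by simp [Nat.add_comm])
  obtain ⟨w, a, b, ha, hb, hrtw, hrxw⟩ := comm_lemma rt rx hrtne hrxne heq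
  have hwne : w ≠ [] := by rintro rfl; exact hrtne (by rw [hrtw, wpow_nil])
  have hw1 : 1 ≤ w.length := List.length_pos_iff.mpr hwne
  have ht' : t = wpow w (a * kt) := by rw [hkt, hrtw, wpow_wpow]
  have hx' : x = wpow w (b * kx) := by rw [hkx, hrxw, wpow_wpow]
  have hta : rt.length ≤ w.length := hmint w (a * kt) (Nat.one_le_iff_ne_zero.mpr
    (by positivity)) ht'
  have htb : rx.length ≤ w.length := hminx w (b * kx) (Nat.one_le_iff_ne_zero.mpr
    (by positivity)) hx'
  have hla : rt.length = a * w.length := by rw [hrtw, length_wpow]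
  have hlb : rx.length = b * w.length := by rw [hrxw, length_wpow]
  have ha1 : a = 1 := by nlinarith
  have hb1 : b = 1 := by nlinarith
  rw [hrtw, hrxw, ha1, hb1]
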